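/- Let n be a positive integer, N = 2ⁿ, ω = exp(2πi/N), and let c : ZMod N → ℂ be the state c(b) = ω^b. Let Add be the addition permutation on two N-dimensional registers, i.e. the linear map on functions ZMod N × ZMod N → ℂ induced by the permutation of basis states |a, b⟩ ↦ |a, a + b⟩. Then for every v : ZMod N → ℂ, Add(v ⊗ c) = (P† v) ⊗ c, where P† is the diagonal operator (P† v)(a) = ω^{−a} · v(a). That is, an adder applied with the Fourier catalyst state in the second register implements the inverse phase-gradient on the first register while returning the catalyst unchanged. -/

import Mathlib

/- STATEMENT 14: The addition permutation |a,b⟩ ↦ |a,a+b⟩ on two N-dimensional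
registers (N = 2ⁿ), with the Fourier catalyst c(b) = ω^b in the second register,
implements the inverse phase gradient (P†v)(a) = ω^{−a}·v(a) on the first
register while returning the catalyst: Add(v ⊗ c) = (P†v) ⊗ c.
Here Add(f)(a,b) = f(a, b−a). -/

open Complex

noncomputable section

/-- The Fourier catalyst state `c(b) = ω^b` with `ω = exp(2πi/2ⁿ)`. -/
def fcat (n : ℕ) : ZMod (2 ^ n) → ℂ :=
  fun b => (Complex.exp (2 * Real.pi * Complex.I / (2 ^ n))) ^ b.val

/-! The catalyst is an eigenvector of every shift because `b ↦ ω ^ b.val` is a character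
of `ZMod N` whenever `ω ^ N = 1`: shifting the second register by `-a` multiplies it by
`ω⁻ᵃ`, which is then absorbed by the first register. -/

theorem pow_val_add_of_pow_eq_one {M : Type*} [Monoid M] {N : ℕ} [NeZero N] {ω : M}
    (hω : ω ^ N = 1) (a b : ZMod N) : ω ^ (a + b).val = ω ^ a.val * ω ^ b.val := by
  rw [ZMod.val_add, ← pow_eq_pow_mod _ hω, pow_add]

theorem pow_val_sub_of_pow_eq_one {G₀ : Type*} [GroupWithZero G₀] {N : ℕ} [NeZero N] {ω : G₀}
    (hω : ω ^ N = 1) (a b : ZMod N) : ω ^ (b - a).val = ω ^ b.val * (ω ^ a.val)⁻¹ := by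
  have hω₀ : ω ≠ 0 := by
    rintro rfl
    simp [NeZero.ne N] at hω
  rw [eq_mul_inv_iff_mul_eq₀ (pow_ne_zero _ hω₀), ← pow_val_add_of_pow_eq_one hω, sub_add_cancel]

theorem exp_two_pi_I_div_two_pow_pow (n : ℕ) :
    Complex.exp (2 * Real.pi * Complex.I / (2 ^ n)) ^ (2 ^ n) = 1 := by
  exact_mod_cast (Complex.isPrimitiveRoot_exp (2 ^ n) (NeZero.ne _)).pow_eq_one

theorem fcat_sub (n : ℕ) (a b : ZMod (2 ^ n)) :
    fcat n (b - a) = fcat n b * (Complex.exp (2 * Real.pi * Complex.I / (2 ^ n)) ^ a.val)⁻¹ :=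
  pow_val_sub_of_pow_eq_one (exp_two_pi_I_div_two_pow_pow n) a b

theorem addition_inverse_phase_gradient_catalysis_general (n : ℕ)
    (v : ZMod (2 ^ n) → ℂ) :
    (fun p : ZMod (2 ^ n) × ZMod (2 ^ n) => v p.1 * fcat n (p.2 - p.1))
      = fun p : ZMod (2 ^ n) × ZMod (2 ^ n) =>
          (((Complex.exp (2 * Real.pi * Complex.I / (2 ^ n))) ^ p.1.val)⁻¹ * v p.1)
            * fcat n p.2 := by
  funext p
  rw [fcat_sub]
  ring

theorem addition_inverse_phase_gradient_catalysis (n : ℕ) (hn : 0 < n)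
    (v : ZMod (2 ^ n) → ℂ) :
    (fun p : ZMod (2 ^ n) × ZMod (2 ^ n) => v p.1 * fcat n (p.2 - p.1))
      = fun p : ZMod (2 ^ n) × ZMod (2 ^ n) =>
          (((Complex.exp (2 * Real.pi * Complex.I / (2 ^ n))) ^ p.1.val)⁻¹ * v p.1)
            * fcat n p.2 :=
  addition_inverse_phase_gradient_catalysis_general n v

end
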